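/- Let n ≥ 1, let 𝒟 be a dyadic grid on ℝⁿ, fix an integer r ≥ 1, 0 < ε < 1 and γ ≥ 2, and let K ∈ 𝒟. Let M_{(r,ε)-deep}(K) be the set of maximal dyadic cubes J with J ⋐_{r,ε} K. Then: (i) there is a constant β, depending only on n, γ, r and ε, such that Σ_{J ∈ M_{(r,ε)-deep}(K)} 1_{γJ}(y) ≤ β for every y ∈ ℝⁿ, i.e. Σ_{J} 1_{γJ} ≤ β · 1_{⋃_J γJ}; (ii) if in addition γ + 1 ≤ 2^{r(1−ε)}, then γJ ⊆ K for every J ∈ M_{(r,ε)-deep}(K), and consequently Σ_{J ∈ M_{(r,ε)-deep}(K)} 1_{γJ} ≤ β · 1_K. -/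

import Mathlib

open MeasureTheory
open scoped ENNReal NNReal

noncomputable section

/-- An axis-parallel half-open cube in `ℝⁿ`, given by its corner `a` and side length `l`. -/
structure QCube (n : ℕ) where
  a : Fin n → ℝ
  l : ℝ

/-- The half-open cube as a subset of `ℝⁿ`. -/
def QCube.pts {n : ℕ} (Q : QCube n) : Set (EuclideanSpace ℝ (Fin n)) :=
  {x | ∀ i, Q.a i ≤ x i ∧ x i < Q.a i + Q.l}

/-- The concentric dilate `γQ` of a cube `Q`. -/
def QCube.dilate {n : ℕ} (Q : QCube n) (γ : ℝ) : QCube n :=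
  ⟨fun i => Q.a i + Q.l / 2 - γ * Q.l / 2, γ * Q.l⟩

/-- The dyadic grid on `ℝⁿ` obtained by translating the standard grid by `t`. -/
def dyadicGrid {n : ℕ} (t : Fin n → ℝ) : Set (QCube n) :=
  {Q | ∃ (k : ℤ) (m : Fin n → ℤ),
    Q = ⟨fun i => t i + (2:ℝ) ^ (-k) * (m i : ℝ), (2:ℝ) ^ (-k)⟩}

/-- `J ⋐_{r,ε} K` : `J` is `(r,ε)`-deeply embedded in `K`, i.e. `J ⊆ K`,
`ℓ(J) ≤ 2^{−r} ℓ(K)`, and `dist(J, ℝⁿ∖K) ≥ ½ ℓ(J)^ε ℓ(K)^{1−ε}`. -/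
def deepEmb {n : ℕ} (r : ℕ) (ε : ℝ) (J K : QCube n) : Prop :=
  J.pts ⊆ K.pts ∧ J.l ≤ 2 ^ (-(r : ℝ)) * K.l ∧
    ∀ x ∈ J.pts, ∀ y ∉ K.pts, 1 / 2 * J.l ^ ε * K.l ^ (1 - ε) ≤ dist x y

/-- `J` belongs to `M_{(r,ε)-deep}(K)`: `J` is a dyadic cube of the grid `t` that is a
maximal dyadic cube `(r,ε)`-deeply embedded in `K`. -/
def maxDeepEmb {n : ℕ} (t : Fin n → ℝ) (r : ℕ) (ε : ℝ) (J K : QCube n) : Prop :=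
  J ∈ dyadicGrid t ∧ deepEmb r ε J K ∧
    ∀ J' ∈ dyadicGrid t, J.pts ⊆ J'.pts → deepEmb r ε J' K → J'.pts ⊆ J.pts

/-!
Write `K = Q_k` and `J = Q_j` for dyadic cubes of side `2^{-k}`, `2^{-j}`, and
`D(J) = ℓ(J)^ε ℓ(K)^{1-ε}`; deep embedding forces `j ≥ k + r`. At a fixed scale at most
`⌈γ⌉^n` cubes have a `γ`-dilate containing `y`, so only the scales need to be counted.
If `J` is maximal, its parent is not deeply embedded, which puts a point of `ℝⁿ ∖ K` within
`≲ D(J)` of `γJ`. If `J'` is deeply embedded, `ℝⁿ ∖ K` stays at distance `≳ D(J')` from `γJ'`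
as soon as `ℓ(J') ≪ ℓ(K)`. As `D` decays geometrically in `j`, the scales of the maximal cubes
whose dilates contain `y` lie, apart from boundedly many scales near `k`, in a window of bounded
width. For (ii), `½ D(J) ≥ (γ + 1) ℓ(J) / 2` keeps `γJ` inside `K`.
-/

theorem EuclideanSpace.dist_le_sum_abs_sub {ι : Type*} [Fintype ι] (x y : EuclideanSpace ℝ ι) :
    dist x y ≤ ∑ i, |x i - y i| := by
  classical
  have hxy : x - y = ∑ i, EuclideanSpace.single i (x i - y i) := by
    ext j; simp
  calc dist x y = ‖∑ i, EuclideanSpace.single i (x i - y i)‖ := by rw [dist_eq_norm, hxy]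
    _ ≤ ∑ i, ‖EuclideanSpace.single i (x i - y i)‖ := norm_sum_le _ _
    _ = ∑ i, |x i - y i| := by simp [PiLp.norm_single]

theorem Real.mul_rpow_one_sub_le_rpow_mul_rpow_one_sub {a b q ε : ℝ} (ha : 0 < a) (hq : 0 ≤ q)
    (hε : ε ≤ 1) (h : a * q ≤ b) : a * q ^ (1 - ε) ≤ a ^ ε * b ^ (1 - ε) := by
  calc a * q ^ (1 - ε) = a ^ ε * (a * q) ^ (1 - ε) := by
        rw [Real.mul_rpow ha.le hq, ← mul_assoc, ← Real.rpow_add ha, add_sub_cancel,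
          Real.rpow_one]
    _ ≤ a ^ ε * b ^ (1 - ε) := by gcongr

theorem Real.rpow_le_of_mul_le_of_rpow_le {a b q c ε : ℝ} (ha : 0 < a) (hq : 0 ≤ q) (hε : 0 ≤ ε)
    (h : a * q ≤ b) (hb : b ^ ε ≤ c * a ^ ε) : q ^ ε ≤ c := by
  have hpos : 0 < a ^ ε := Real.rpow_pos_of_pos ha ε
  have : a ^ ε * q ^ ε ≤ a ^ ε * c := by
    rw [← Real.mul_rpow ha.le hq, mul_comm _ c]
    exact (Real.rpow_le_rpow (by positivity) h hε).trans hb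
  exact le_of_mul_le_mul_left this hpos

theorem exists_lt_two_pow_rpow (c : ℝ) {s : ℝ} (hs : 0 < s) : ∃ N : ℕ, c < ((2 : ℝ) ^ N) ^ s := by
  obtain ⟨N, hN⟩ := pow_unbounded_of_one_lt c (Real.one_lt_rpow one_lt_two hs)
  refine ⟨N, ?_⟩
  rwa [← Real.rpow_natCast_mul zero_le_two, mul_comm, Real.rpow_mul_natCast zero_le_two]

theorem Int.card_Ioc_floor_floor_add_le (x γ : ℝ) : (Finset.Ioc ⌊x⌋ ⌊x + γ⌋).card ≤ ⌈γ⌉₊ := by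
  have : ⌊x + γ⌋ ≤ ⌊x⌋ + ⌈γ⌉₊ := by
    rw [← Int.floor_add_intCast]
    exact Int.floor_mono (by push_cast; linarith [Nat.le_ceil γ])
  rw [Int.card_Ioc]
  omega

theorem Int.exists_finset_superset_card_le {T : Set ℤ} (a : ℤ) (L W : ℕ) (ha : ∀ j ∈ T, a ≤ j)
    (hW : ∀ j₁ ∈ T, ∀ j₂ ∈ T, a + L < j₁ → a + L < j₂ → j₁ - j₂ ≤ W) :
    ∃ I : Finset ℤ, T ⊆ I ∧ I.card ≤ L + 2 * W + 2 := by
  by_cases hbig : ∃ j₀ ∈ T, a + L < j₀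
  · obtain ⟨j₀, hj₀, hlt⟩ := hbig
    refine ⟨Finset.Icc a (a + L) ∪ Finset.Icc (j₀ - W) (j₀ + W), fun j hj => ?_, ?_⟩
    · by_cases hjL : j ≤ a + L
      · simp [ha j hj, hjL]
      · have := hW j hj j₀ hj₀ (by omega) hlt
        have := hW j₀ hj₀ j hj hlt (by omega)
        simp only [Finset.coe_union, Finset.coe_Icc, Set.mem_union, Set.mem_Icc]
        omega
    · refine (Finset.card_union_le _ _).trans ?_
      simp only [Int.card_Icc]
      omega
  · push Not at hbig
    refine ⟨Finset.Icc a (a + L), fun j hj => ?_, ?_⟩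
    · simp [ha j hj, hbig j hj]
    · simp only [Int.card_Icc]
      omega

namespace QCube

variable {n : ℕ}

def corner (Q : QCube n) : EuclideanSpace ℝ (Fin n) := WithLp.toLp 2 Q.a

theorem corner_mem_pts {Q : QCube n} (hl : 0 < Q.l) : Q.corner ∈ Q.pts :=
  fun i => by simp [corner, hl]

theorem dist_le_of_mem_pts {Q : QCube n} {x y : EuclideanSpace ℝ (Fin n)} (hx : x ∈ Q.pts)
    (hy : y ∈ Q.pts) : dist x y ≤ n * Q.l :=
  calc dist x y ≤ ∑ i, |x i - y i| := EuclideanSpace.dist_le_sum_abs_sub x y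
    _ ≤ ∑ _i : Fin n, Q.l := Finset.sum_le_sum fun i _ => by
        obtain ⟨hx₁, hx₂⟩ := hx i
        obtain ⟨hy₁, hy₂⟩ := hy i
        rw [abs_le]
        constructor <;> linarith
    _ = n * Q.l := by simp

theorem pts_subset_dilate (Q : QCube n) {γ : ℝ} (hγ : 1 ≤ γ) : Q.pts ⊆ (Q.dilate γ).pts := by
  intro x hx i
  obtain ⟨h₁, h₂⟩ := hx i
  simp only [dilate]
  constructor <;> nlinarith

theorem l_le_of_pts_subset [NeZero n] {Q Q' : QCube n} (hl : 0 < Q.l) (h : Q.pts ⊆ Q'.pts) :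
    Q.l ≤ Q'.l := by
  by_contra! hlt
  have hQ' := h (Q.corner_mem_pts hl) 0
  simp only [corner] at hQ'
  -- shifting the corner of `Q` by `ℓ(Q') < ℓ(Q)` stays in `Q` but leaves `Q'`
  have hmem : Q.corner + EuclideanSpace.single 0 Q'.l ∈ Q.pts := fun i => by
    by_cases hi : i = 0
    · subst hi
      simp only [corner, PiLp.add_apply, PiLp.single_eq_same]
      constructor <;> linarith [hQ'.1, hQ'.2]
    · simp [corner, hi, hl]
  have := (h hmem 0).2
  simp only [corner, PiLp.add_apply, PiLp.single_eq_same] at this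
  linarith

theorem mem_Icc_of_forall_le_dist {Q : QCube n} {x : EuclideanSpace ℝ (Fin n)} {δ : ℝ}
    (hx : x ∈ Q.pts) (h : ∀ z ∉ Q.pts, δ ≤ dist x z) (i : Fin n) :
    x i ∈ Set.Icc (Q.a i + δ) (Q.a i + Q.l - δ) := by
  have hshift (c : ℝ) (hc : x i + c < Q.a i ∨ Q.a i + Q.l ≤ x i + c) : δ ≤ |c| := by
    have hz : x + EuclideanSpace.single i c ∉ Q.pts := fun hz => by
      have := hz i
      simp only [PiLp.add_apply, PiLp.single_eq_same] at this
      rcases hc with hc | hc <;> linarith [this.1, this.2]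
    simpa [PiLp.norm_single] using h _ hz
  obtain ⟨hx₁, hx₂⟩ := hx i
  constructor
  · by_contra! hlt
    have := hshift (-(x i + δ - Q.a i) / 2) (Or.inl (by linarith))
    rw [abs_of_neg (by linarith)] at this
    linarith
  · have := hshift (Q.a i + Q.l - x i) (Or.inr (by linarith))
    rw [abs_of_pos (by linarith)] at this
    linarith

end QCube

section DeepEmbedding

variable {n r : ℕ} {ε : ℝ}

theorem two_rpow_neg_mul_le_iff {a b : ℝ} : a ≤ 2 ^ (-(r : ℝ)) * b ↔ a * 2 ^ r ≤ b := by
  rw [Real.rpow_neg zero_le_two, Real.rpow_natCast, inv_mul_eq_div, le_div_iff₀ (by positivity)]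

theorem deepEmb.corner_mem_Icc {J K : QCube n} (hd : deepEmb r ε J K) (hJ : 0 < J.l) (i : Fin n) :
    J.a i ∈ Set.Icc (K.a i + 1 / 2 * J.l ^ ε * K.l ^ (1 - ε))
      (K.a i + K.l - 1 / 2 * J.l ^ ε * K.l ^ (1 - ε)) :=
  QCube.mem_Icc_of_forall_le_dist (hd.1 (J.corner_mem_pts hJ)) (hd.2.2 _ (J.corner_mem_pts hJ)) i

theorem deepEmb.dilate_pts_subset {J K : QCube n} {γ : ℝ} (hd : deepEmb r ε J K) (hJ : 0 < J.l)
    (hε : ε ≤ 1) (hγ : γ + 1 ≤ 2 ^ ((r : ℝ) * (1 - ε))) : (J.dilate γ).pts ⊆ K.pts := by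
  have hmargin : (γ + 1) * J.l ≤ J.l ^ ε * K.l ^ (1 - ε) := by
    rw [Real.rpow_natCast_mul zero_le_two] at hγ
    calc (γ + 1) * J.l ≤ J.l * ((2 : ℝ) ^ r) ^ (1 - ε) := by rw [mul_comm]; gcongr
      _ ≤ J.l ^ ε * K.l ^ (1 - ε) :=
        Real.mul_rpow_one_sub_le_rpow_mul_rpow_one_sub hJ (by positivity) hε
          (two_rpow_neg_mul_le_iff.1 hd.2.1)
  intro x hx i
  obtain ⟨hlo, hhi⟩ := hd.corner_mem_Icc hJ i
  obtain ⟨hx₁, hx₂⟩ := hx i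
  simp only [QCube.dilate] at hx₁ hx₂
  constructor <;> nlinarith

theorem deepEmb.half_le_dist_add {J K : QCube n} {γ : ℝ} (hd : deepEmb r ε J K) (hJ : 0 < J.l)
    (hγ : 1 ≤ γ) {y z : EuclideanSpace ℝ (Fin n)} (hy : y ∈ (J.dilate γ).pts) (hz : z ∉ K.pts) :
    1 / 2 * J.l ^ ε * K.l ^ (1 - ε) ≤ dist y z + n * (γ * J.l) := by
  have hx := J.corner_mem_pts hJ
  have hxy : dist J.corner y ≤ n * (γ * J.l) :=
    QCube.dist_le_of_mem_pts (J.pts_subset_dilate hγ hx) hy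
  linarith [hd.2.2 _ hx z hz, dist_triangle J.corner y z]

theorem exists_notMem_dist_le_of_not_deepEmb {P K : QCube n} (hP : ¬ deepEmb r ε P K)
    (hsize : P.l ≤ 2 ^ (-(r : ℝ)) * K.l) (hl : 0 ≤ P.l) {x : EuclideanSpace ℝ (Fin n)}
    (hx : x ∈ P.pts) : ∃ z ∉ K.pts, dist x z ≤ n * P.l + 1 / 2 * P.l ^ ε * K.l ^ (1 - ε) := by
  have hK : 0 ≤ K.l := (mul_nonneg hl (by positivity)).trans (two_rpow_neg_mul_le_iff.1 hsize)
  have hδ : 0 ≤ 1 / 2 * P.l ^ ε * K.l ^ (1 - ε) := by positivity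
  unfold deepEmb at hP
  by_cases hPK : P.pts ⊆ K.pts
  · obtain ⟨x', hx', z, hz, hlt⟩ : ∃ x' ∈ P.pts, ∃ z ∉ K.pts,
        dist x' z < 1 / 2 * P.l ^ ε * K.l ^ (1 - ε) := by
      push Not at hP
      exact hP hPK hsize
    exact ⟨z, hz, by linarith [dist_triangle x x' z, QCube.dist_le_of_mem_pts hx hx']⟩
  · obtain ⟨z, hzP, hz⟩ := Set.not_subset.1 hPK
    exact ⟨z, hz, by linarith [QCube.dist_le_of_mem_pts hx hzP]⟩

end DeepEmbedding

section DyadicGrid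

variable {n : ℕ} {t : Fin n → ℝ}

def dyadicCube (t : Fin n → ℝ) (k : ℤ) (m : Fin n → ℤ) : QCube n :=
  ⟨fun i => t i + (2 : ℝ) ^ (-k) * (m i : ℝ), (2 : ℝ) ^ (-k)⟩

theorem mem_dyadicGrid_iff {Q : QCube n} : Q ∈ dyadicGrid t ↔ ∃ k m, Q = dyadicCube t k m :=
  Iff.rfl

theorem dyadicCube_l_pos (t : Fin n → ℝ) (k : ℤ) (m : Fin n → ℤ) : 0 < (dyadicCube t k m).l :=
  zpow_pos two_pos _

theorem two_zpow_neg_mul_pow_le_iff {j k : ℤ} {N : ℕ} :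
    (2 : ℝ) ^ (-j) * 2 ^ N ≤ 2 ^ (-k) ↔ k + N ≤ j := by
  rw [← zpow_natCast, ← zpow_add₀ two_ne_zero, zpow_le_zpow_iff_right₀ one_lt_two]
  omega

theorem deepEmb.add_le_of_dyadicCube {r : ℕ} {ε : ℝ} {j k : ℤ} {m mk : Fin n → ℤ}
    (hd : deepEmb r ε (dyadicCube t j m) (dyadicCube t k mk)) : k + r ≤ j :=
  two_zpow_neg_mul_pow_le_iff.1 (two_rpow_neg_mul_le_iff.1 hd.2.1)

theorem dyadicCube_parent_l (t : Fin n → ℝ) (k : ℤ) (m : Fin n → ℤ) :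
    (dyadicCube t (k - 1) fun i => m i / 2).l = 2 * (dyadicCube t k m).l := by
  show (2 : ℝ) ^ (-(k - 1)) = 2 * 2 ^ (-k)
  rw [neg_sub, zpow_sub₀ two_ne_zero, zpow_one, zpow_neg]
  ring

theorem dyadicCube_pts_subset_parent (t : Fin n → ℝ) (k : ℤ) (m : Fin n → ℤ) :
    (dyadicCube t k m).pts ⊆ (dyadicCube t (k - 1) fun i => m i / 2).pts := by
  intro x hx i
  obtain ⟨hx₁, hx₂⟩ := hx i
  have hl := dyadicCube_parent_l t k m
  have hpos := dyadicCube_l_pos t k m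
  simp only [dyadicCube] at hl hpos hx₁ hx₂ ⊢
  have hlo : (2 : ℝ) * ↑(m i / 2) ≤ m i := by exact_mod_cast (by omega : 2 * (m i / 2) ≤ m i)
  have hhi : (m i : ℝ) + 1 ≤ 2 * ↑(m i / 2) + 2 := by
    exact_mod_cast (by omega : m i + 1 ≤ 2 * (m i / 2) + 2)
  rw [hl]
  constructor <;> nlinarith

end DyadicGrid

section MaximalCubes

variable {n r : ℕ} {ε γ : ℝ} {t : Fin n → ℝ} {k : ℤ} {mk : Fin n → ℤ}

/-- The parent of a maximal cube is not deeply embedded, so it reaches close to `ℝⁿ ∖ K`. -/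
theorem maxDeepEmb.exists_notMem_dist_le [NeZero n] {j : ℤ} {m : Fin n → ℤ}
    (hmax : maxDeepEmb t r ε (dyadicCube t j m) (dyadicCube t k mk)) (hj : k + r < j)
    (hγ : 1 ≤ γ) (hε : ε ≤ 1) {y : EuclideanSpace ℝ (Fin n)}
    (hy : y ∈ ((dyadicCube t j m).dilate γ).pts) :
    ∃ z ∉ (dyadicCube t k mk).pts, dist y z ≤
      (n * (γ + 2) + 1) * ((dyadicCube t j m).l ^ ε * (dyadicCube t k mk).l ^ (1 - ε)) := by
  set J := dyadicCube t j m
  set K := dyadicCube t k mk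
  set P := dyadicCube t (j - 1) fun i => m i / 2
  have hJ : 0 < J.l := dyadicCube_l_pos t j m
  have hPl : P.l = 2 * J.l := dyadicCube_parent_l t j m
  have hP : ¬ deepEmb r ε P K := fun hP => by
    have := QCube.l_le_of_pts_subset (dyadicCube_l_pos _ _ _)
      (hmax.2.2 P ⟨_, _, rfl⟩ (dyadicCube_pts_subset_parent t j m) hP)
    linarith
  have hPsize : P.l ≤ 2 ^ (-(r : ℝ)) * K.l :=
    two_rpow_neg_mul_le_iff.2 (two_zpow_neg_mul_pow_le_iff.2 (by omega))
  have hx := J.corner_mem_pts hJ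
  obtain ⟨z, hz, hxz⟩ := exists_notMem_dist_le_of_not_deepEmb hP hPsize (by linarith)
    (dyadicCube_pts_subset_parent t j m hx)
  refine ⟨z, hz, ?_⟩
  set D := J.l ^ ε * K.l ^ (1 - ε)
  have hJK : J.l * 2 ^ 0 ≤ K.l := two_zpow_neg_mul_pow_le_iff.2 (by omega)
  have hJD : J.l ≤ D := by
    simpa using Real.mul_rpow_one_sub_le_rpow_mul_rpow_one_sub hJ zero_le_one hε
      (by simpa using hJK)
  have hPD : 1 / 2 * P.l ^ ε * K.l ^ (1 - ε) ≤ D := by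
    have h2 : (2 : ℝ) ^ ε ≤ 2 := by simpa using Real.rpow_le_rpow_of_exponent_le one_le_two hε
    rw [hPl, Real.mul_rpow zero_le_two hJ.le]
    have : 0 ≤ D := hJ.le.trans hJD
    nlinarith
  have hyx : dist y J.corner ≤ n * (γ * J.l) :=
    QCube.dist_le_of_mem_pts hy (J.pts_subset_dilate hγ hx)
  have hnP : (n : ℝ) * P.l = n * (2 * J.l) := by rw [hPl]
  have hslack : 0 ≤ n * (γ + 2) * (D - J.l) := by
    have := n.cast_nonneg (α := ℝ)
    have : 0 ≤ D - J.l := by linarith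
    positivity
  calc dist y z ≤ dist y J.corner + dist J.corner z := dist_triangle _ _ _
    _ ≤ n * (γ + 2) * J.l + D := by linarith
    _ ≤ (n * (γ + 2) + 1) * D := by linarith

/-- `ℝⁿ ∖ K` is within `≲ ℓ(J₁)^ε ℓ(K)^{1-ε}` of `y` by maximality of `J₁`, but at distance
`≳ ℓ(J₂)^ε ℓ(K)^{1-ε}` by the depth of `J₂`, and the ratio of these is `2^{(j₁-j₂)ε}`. -/
theorem maxDeepEmb.sub_lt [NeZero n] {A W : ℕ} {j₁ j₂ : ℤ} {m₁ m₂ : Fin n → ℤ}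
    (hγ : 1 ≤ γ) (hε₀ : 0 ≤ ε) (hε₁ : ε ≤ 1)
    (hA : 4 * (n * γ) < ((2 : ℝ) ^ A) ^ (1 - ε)) (hW : 4 * (n * (γ + 2) + 1) < ((2 : ℝ) ^ W) ^ ε)
    (h₁ : maxDeepEmb t r ε (dyadicCube t j₁ m₁) (dyadicCube t k mk))
    (h₂ : deepEmb r ε (dyadicCube t j₂ m₂) (dyadicCube t k mk))
    (hj₁ : k + r < j₁) (hj₂ : k + A ≤ j₂) {y : EuclideanSpace ℝ (Fin n)}
    (hy₁ : y ∈ ((dyadicCube t j₁ m₁).dilate γ).pts)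
    (hy₂ : y ∈ ((dyadicCube t j₂ m₂).dilate γ).pts) : j₁ - j₂ < W := by
  by_contra! hW'
  set J₁ := dyadicCube t j₁ m₁
  set J₂ := dyadicCube t j₂ m₂
  set K := dyadicCube t k mk
  have hJ₂ : 0 < J₂.l := dyadicCube_l_pos _ _ _
  obtain ⟨z, hz, hupper⟩ := h₁.exists_notMem_dist_le hj₁ hγ hε₁ hy₁
  have hlower := h₂.half_le_dist_add hJ₂ hγ hy₂ hz
  have hsmall : 4 * (n * γ) * J₂.l ≤ J₂.l ^ ε * K.l ^ (1 - ε) := by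
    have : J₂.l * ((2 : ℝ) ^ A) ^ (1 - ε) ≤ J₂.l ^ ε * K.l ^ (1 - ε) :=
      Real.mul_rpow_one_sub_le_rpow_mul_rpow_one_sub hJ₂ (by positivity) hε₁
        (two_zpow_neg_mul_pow_le_iff.2 hj₂)
    nlinarith [mul_lt_mul_of_pos_left hA hJ₂]
  have hK : 0 < K.l ^ (1 - ε) := Real.rpow_pos_of_pos (dyadicCube_l_pos _ _ _) _
  have hcmp : J₂.l ^ ε ≤ 4 * (n * (γ + 2) + 1) * J₁.l ^ ε := by
    refine le_of_mul_le_mul_right ?_ hK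
    linarith
  have hscale : J₁.l * 2 ^ W ≤ J₂.l := two_zpow_neg_mul_pow_le_iff.2 (by omega)
  have := Real.rpow_le_of_mul_le_of_rpow_le (dyadicCube_l_pos _ _ _) (by positivity) hε₀ hscale hcmp
  linarith

end MaximalCubes

section Counting

variable {n : ℕ}

def dilateIndices (t : Fin n → ℝ) (y : EuclideanSpace ℝ (Fin n)) (γ : ℝ) (j : ℤ) :
    Finset (Fin n → ℤ) :=
  Fintype.piFinset fun i =>
    Finset.Ioc ⌊(y i - t i) / 2 ^ (-j) - (γ + 1) / 2⌋ ⌊(y i - t i) / 2 ^ (-j) - (γ + 1) / 2 + γ⌋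

theorem mem_dilateIndices {t : Fin n → ℝ} {y : EuclideanSpace ℝ (Fin n)} {γ : ℝ} {j : ℤ}
    {m : Fin n → ℤ} (hy : y ∈ ((dyadicCube t j m).dilate γ).pts) : m ∈ dilateIndices t y γ j := by
  refine Fintype.mem_piFinset.2 fun i => Finset.mem_Ioc.2 ⟨Int.floor_lt.2 ?_, Int.le_floor.2 ?_⟩
  all_goals
    obtain ⟨hy₁, hy₂⟩ := hy i
    have hl := dyadicCube_l_pos t j m
    simp only [QCube.dilate, dyadicCube] at hy₁ hy₂ hl
  · have : (y i - t i) / 2 ^ (-j) < m i + (γ + 1) / 2 := by rw [div_lt_iff₀ hl]; linarith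
    linarith
  · have : m i - (γ - 1) / 2 ≤ (y i - t i) / 2 ^ (-j) := by rw [le_div_iff₀ hl]; linarith
    linarith

theorem card_dilateIndices_le (t : Fin n → ℝ) (y : EuclideanSpace ℝ (Fin n)) (γ : ℝ) (j : ℤ) :
    (dilateIndices t y γ j).card ≤ ⌈γ⌉₊ ^ n := by
  rw [dilateIndices, Fintype.card_piFinset]
  simpa only [Finset.card_univ, Fintype.card_fin] using
    Finset.prod_le_pow_card Finset.univ _ _ fun i _ => Int.card_Ioc_floor_floor_add_le
      ((y i - t i) / 2 ^ (-j) - (γ + 1) / 2) γ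

theorem finite_and_ncard_le_of_forall_mem_dilate {t : Fin n → ℝ} {y : EuclideanSpace ℝ (Fin n)}
    {γ : ℝ} {S : Set (QCube n)} (I : Finset ℤ)
    (hS : ∀ J ∈ S, ∃ j ∈ I, ∃ m, J = dyadicCube t j m ∧ y ∈ (J.dilate γ).pts) :
    S.Finite ∧ S.ncard ≤ I.card * ⌈γ⌉₊ ^ n := by
  classical
  set F := I.biUnion fun j => (dilateIndices t y γ j).image (dyadicCube t j)
  have hSF : S ⊆ F := by
    intro J hJ
    obtain ⟨j, hj, m, rfl, hy⟩ := hS J hJ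
    exact Finset.mem_biUnion.2 ⟨j, hj, Finset.mem_image_of_mem _ (mem_dilateIndices hy)⟩
  refine ⟨F.finite_toSet.subset hSF, ?_⟩
  calc S.ncard ≤ F.card := by simpa using Set.ncard_le_ncard hSF F.finite_toSet
    _ ≤ ∑ j ∈ I, ((dilateIndices t y γ j).image (dyadicCube t j)).card := Finset.card_biUnion_le
    _ ≤ ∑ _j ∈ I, ⌈γ⌉₊ ^ n :=
      Finset.sum_le_sum fun j _ => Finset.card_image_le.trans (card_dilateIndices_le t y γ j)
    _ = I.card * ⌈γ⌉₊ ^ n := by simp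

end Counting

theorem statement4_general (n r : ℕ) (ε γ : ℝ) (hn : 1 ≤ n)
    (hε0 : 0 < ε) (hε1 : ε < 1) (hγ : 2 ≤ γ) :
    ∃ β : ℕ, ∀ t : Fin n → ℝ, ∀ K ∈ dyadicGrid t,
      (∀ y : EuclideanSpace ℝ (Fin n),
        {J : QCube n | maxDeepEmb t r ε J K ∧ y ∈ (J.dilate γ).pts}.Finite ∧
        {J : QCube n | maxDeepEmb t r ε J K ∧ y ∈ (J.dilate γ).pts}.ncard ≤ β) ∧
      (γ + 1 ≤ 2 ^ ((r : ℝ) * (1 - ε)) →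
        (∀ J : QCube n, maxDeepEmb t r ε J K → (J.dilate γ).pts ⊆ K.pts) ∧
        ∀ y : EuclideanSpace ℝ (Fin n), y ∉ K.pts →
          {J : QCube n | maxDeepEmb t r ε J K ∧ y ∈ (J.dilate γ).pts} = ∅) := by
  have : NeZero n := ⟨by omega⟩
  obtain ⟨A, hA⟩ := exists_lt_two_pow_rpow (4 * (n * γ)) (sub_pos.2 hε1)
  obtain ⟨W, hW⟩ := exists_lt_two_pow_rpow (4 * (n * (γ + 2) + 1)) hε0
  refine ⟨(max r A + 2 * W + 2) * ⌈γ⌉₊ ^ n, fun t K hK => ?_⟩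
  obtain ⟨k, mk, rfl⟩ := mem_dyadicGrid_iff.1 hK
  have hsub (hγr : γ + 1 ≤ 2 ^ ((r : ℝ) * (1 - ε))) (J : QCube n)
      (hJ : maxDeepEmb t r ε J (dyadicCube t k mk)) :
      (J.dilate γ).pts ⊆ (dyadicCube t k mk).pts := by
    obtain ⟨⟨j, m, rfl⟩, hd, -⟩ := hJ
    exact hd.dilate_pts_subset (dyadicCube_l_pos t j m) hε1.le hγr
  refine ⟨fun y => ?_, fun hγr => ⟨hsub hγr, fun y hy => ?_⟩⟩
  · set S := {J | maxDeepEmb t r ε J (dyadicCube t k mk) ∧ y ∈ (J.dilate γ).pts}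
    obtain ⟨I, hTI, hI⟩ :=
      Int.exists_finset_superset_card_le (T := {j | ∃ m, dyadicCube t j m ∈ S}) k (max r A) W
        (fun j ⟨m, hm⟩ => by have := hm.1.2.1.add_le_of_dyadicCube; omega)
        (fun j₁ ⟨m₁, h₁⟩ j₂ ⟨m₂, h₂⟩ hj₁ hj₂ => (h₁.1.sub_lt (by linarith) hε0.le hε1.le hA hW
          h₂.1.2.1 (by omega) (by omega) h₁.2 h₂.2).le)
    refine (finite_and_ncard_le_of_forall_mem_dilate (t := t) (y := y) I fun J hJ => ?_).imp_right
      (·.trans (Nat.mul_le_mul_right _ hI))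
    obtain ⟨j, m, rfl⟩ := hJ.1.1
    exact ⟨j, hTI ⟨m, hJ⟩, m, rfl, hJ.2⟩
  · exact Set.eq_empty_of_forall_notMem fun J hJ => hy (hsub hγr J hJ.1 hJ.2)

/-- Bounded overlap of the dilates of the maximal `(r,ε)`-deeply embedded
dyadic subcubes of `K ∈ 𝒟`: (i) there is `β = β(n,γ,r,ε)` with
`Σ_{J ∈ M_{(r,ε)-deep}(K)} 1_{γJ} ≤ β`, and (ii) if moreover `γ + 1 ≤ 2^{r(1−ε)}` then
`γJ ⊆ K` for every such `J`, so `Σ_J 1_{γJ} ≤ β 1_K`. -/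
theorem statement4 (n r : ℕ) (ε γ : ℝ) (hn : 1 ≤ n) (hr : 1 ≤ r)
    (hε0 : 0 < ε) (hε1 : ε < 1) (hγ : 2 ≤ γ) :
    ∃ β : ℕ, ∀ t : Fin n → ℝ, ∀ K ∈ dyadicGrid t,
      (∀ y : EuclideanSpace ℝ (Fin n),
        {J : QCube n | maxDeepEmb t r ε J K ∧ y ∈ (J.dilate γ).pts}.Finite ∧
        {J : QCube n | maxDeepEmb t r ε J K ∧ y ∈ (J.dilate γ).pts}.ncard ≤ β) ∧
      (γ + 1 ≤ 2 ^ ((r : ℝ) * (1 - ε)) →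
        (∀ J : QCube n, maxDeepEmb t r ε J K → (J.dilate γ).pts ⊆ K.pts) ∧
        ∀ y : EuclideanSpace ℝ (Fin n), y ∉ K.pts →
          {J : QCube n | maxDeepEmb t r ε J K ∧ y ∈ (J.dilate γ).pts} = ∅) :=
  statement4_general n r ε γ hn hε0 hε1 hγ
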